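/- arXiv:2005.00856 — 5 statements merged into one kernel-verified Lean document; each statement's English description precedes it below -/
import Mathlib

section
/- Let k = 2 and m ≥ 1, and let h, r, t be segmented embeddings with segments h₀, h₁, r₀, r₁, t₀, t₁ ∈ ℝ^m. Form the complex vectors H, R, T ∈ ℂ^m by H_i = (h₀)_i + (h₁)_i·I, R_i = (r₀)_i + (r₁)_i·I, T_i = (t₀)_i + (t₁)_i·I. Then f₄(h, r, t) = Re(∑_{i<m} R_i · H_i · conj(T_i)), i.e., SEEK with k = 2 coincides with the ComplEx scoring function whose real and imaginary parts are the even and odd segments respectively. -/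
open Finset

/-- Multi-linear dot product of three vectors in ℝ^m. -/
def mdot {m : ℕ} (a b c : Fin m → ℝ) : ℝ := ∑ i : Fin m, a i * b i * c i

/-- Sign s_{x,y}: -1 if x is odd and x + y ≥ k, else 1. -/
def sSign {k : ℕ} (x y : Fin k) : ℝ :=
  if x.val % 2 = 1 ∧ k ≤ x.val + y.val then -1 else 1

/-- Tail index w_{x,y}: y if x even, (x+y) mod k if x odd. -/
def wIdx {k : ℕ} (x y : Fin k) : Fin k :=
  if x.val % 2 = 0 then y else ⟨(x.val + y.val) % k, Nat.mod_lt _ x.pos⟩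

/-- SEEK scoring function f₄. -/
def f4 {k m : ℕ} (h r t : Fin k → Fin m → ℝ) : ℝ :=
  ∑ x : Fin k, ∑ y : Fin k, sSign x y * mdot (r x) (h y) (t (wIdx x y))

/-- All-segments scoring function f₂. -/
def f2 {k m : ℕ} (h r t : Fin k → Fin m → ℝ) : ℝ :=
  ∑ x : Fin k, ∑ y : Fin k, ∑ w : Fin k, mdot (r x) (h y) (t w)

/-- Signed scoring function f₃. -/
def f3 {k m : ℕ} (h r t : Fin k → Fin m → ℝ) : ℝ :=
  ∑ x : Fin k, ∑ y : Fin k, ∑ w : Fin k, sSign x y * mdot (r x) (h y) (t w)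


/-! For k = 2, SEEK keeps four of the eight triple products ⟨r_x, h_y, t_w⟩, with a single minus
sign on ⟨r₁, h₁, t₀⟩. Expanding Re(R H conj T) coordinatewise with R = r₀ + r₁ i etc. produces
exactly these four terms, the minus sign coming from i² = −1. -/

theorem f4_fin_two {m : ℕ} (h r t : Fin 2 → Fin m → ℝ) :
    f4 h r t = mdot (r 0) (h 0) (t 0) + mdot (r 0) (h 1) (t 1) + mdot (r 1) (h 0) (t 1) -
      mdot (r 1) (h 1) (t 0) := by
  simp only [f4, Fin.sum_univ_two, sSign, wIdx]
  norm_num [Fin.ext_iff]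
  ring

theorem Complex.re_mul_mul_conj (z w u : ℂ) :
    (z * w * starRingEnd ℂ u).re =
      z.re * w.re * u.re + z.re * w.im * u.im + z.im * w.re * u.im - z.im * w.im * u.re := by
  simp only [mul_re, mul_im, conj_re, conj_im]
  ring

theorem seek_k2_eq_complex_general (m : ℕ) (h r t : Fin 2 → Fin m → ℝ) :
    f4 h r t =
      (∑ i : Fin m,
        ((r 0 i : ℂ) + (r 1 i : ℂ) * Complex.I) *
          ((h 0 i : ℂ) + (h 1 i : ℂ) * Complex.I) *
          (starRingEnd ℂ) ((t 0 i : ℂ) + (t 1 i : ℂ) * Complex.I)).re := by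
  rw [f4_fin_two, Complex.re_sum]
  simp only [mdot, ← Finset.sum_add_distrib, ← Finset.sum_sub_distrib]
  refine Finset.sum_congr rfl fun i _ => ?_
  rw [Complex.re_mul_mul_conj]
  simp

/-- SEEK with k = 2 coincides with the ComplEx scoring function whose real and
imaginary parts are the even and odd segments respectively. -/
theorem seek_k2_eq_complex (m : ℕ) (hm : 1 ≤ m) (h r t : Fin 2 → Fin m → ℝ) :
    f4 h r t =
      (∑ i : Fin m,
        ((r 0 i : ℂ) + (r 1 i : ℂ) * Complex.I) *
          ((h 0 i : ℂ) + (h 1 i : ℂ) * Complex.I) *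
          (starRingEnd ℂ) ((t 0 i : ℂ) + (t 1 i : ℂ) * Complex.I)).re :=
  seek_k2_eq_complex_general m h r t
end

section
/- For all integers k ≥ 1 and m ≥ 1 and all segmented embeddings h, r, t, the all-segments scoring function f₂ is symmetric in the head and tail entities: f₂(h, r, t) = f₂(t, r, h). -/
open Finset

theorem mdot_comm_right {m : ℕ} (a b c : Fin m → ℝ) : mdot a b c = mdot a c b :=
  sum_congr rfl fun _ _ => mul_right_comm _ _ _

theorem f2_symm_general (k m : ℕ) (h r t : Fin k → Fin m → ℝ) :
    f2 h r t = f2 t r h := by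
  simp only [f2, mdot_comm_right (r _) (h _)]
  exact sum_congr rfl fun _ _ => sum_comm

/-- f₂ is symmetric in the head and tail entities. -/
theorem f2_symm (k m : ℕ) (hk : 1 ≤ k) (hm : 1 ≤ m) (h r t : Fin k → Fin m → ℝ) :
    f2 h r t = f2 t r h :=
  f2_symm_general k m h r t
end

section
/- Let k ≥ 1 and m ≥ 1, and let h, r, t be segmented embeddings. If every odd-indexed segment of r vanishes (r_x = 0 for all odd x), then the signed scoring function f₃ is symmetric in the head and tail: f₃(h, r, t) = f₃(t, r, h). -/
open Finset

theorem mdot_zero_left {m : ℕ} (b c : Fin m → ℝ) : mdot 0 b c = 0 := by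
  simp [mdot]

theorem sum_sum_mdot_comm {k m : ℕ} (a : Fin m → ℝ) (b c : Fin k → Fin m → ℝ) :
    ∑ y : Fin k, ∑ w : Fin k, mdot a (b y) (c w) = ∑ y : Fin k, ∑ w : Fin k, mdot a (c y) (b w) := by
  rw [sum_comm]
  simp only [mdot_comm_right a (b _)]

theorem sSign_of_mod_two_eq_zero {k : ℕ} {x : Fin k} (hx : x.val % 2 = 0) (y : Fin k) :
    sSign x y = 1 :=
  if_neg fun h => by omega

theorem f3_symm_of_odd_zero_general (k m : ℕ)
    (h r t : Fin k → Fin m → ℝ) (hr : ∀ x : Fin k, x.val % 2 = 1 → r x = 0) :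
    f3 h r t = f3 t r h := by
  refine sum_congr rfl fun x _ => ?_
  rcases Nat.mod_two_eq_zero_or_one x.val with hx | hx
  · simp only [sSign_of_mod_two_eq_zero hx, one_mul]
    exact sum_sum_mdot_comm (r x) h t
  · simp only [hr x hx, mdot_zero_left, mul_zero, sum_const_zero]

/-- If every odd-indexed segment of r vanishes, then f₃ is symmetric in head and tail. -/
theorem f3_symm_of_odd_zero (k m : ℕ) (hk : 1 ≤ k) (hm : 1 ≤ m)
    (h r t : Fin k → Fin m → ℝ) (hr : ∀ x : Fin k, x.val % 2 = 1 → r x = 0) :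
    f3 h r t = f3 t r h :=
  f3_symm_of_odd_zero_general k m h r t hr
end

section
/- For every integer k ≥ 2 and every m ≥ 1, the signed scoring function f₃ can distinguish a triple from its reverse: there exist segmented embeddings h, r, t (with k segments of dimension m each) such that f₃(h, r, t) ≠ f₃(t, r, h). Hence f₃ supports the modeling of antisymmetric relations, unlike f₂. -/
open Finset

/-!
If `r`, `h`, `t` each occupy a single segment `x`, `y`, `w`, then `f₃(h, r, t) = s_{x,y} ⟨r_x, h_y, t_w⟩`,
and reversing the triple replaces `s_{x,y}` by `s_{x,w}`. Taking `x = 1`, `y = 0`, `w = k - 1` and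
all-ones segments gives `f₃(h, r, t) = m` but `f₃(t, r, h) = -m`.
-/

lemma mdot_one_one_one (m : ℕ) : mdot (1 : Fin m → ℝ) 1 1 = m := by
  simp [mdot]

lemma sSign_of_add_lt {k : ℕ} {x y : Fin k} (h : x.val + y.val < k) : sSign x y = 1 :=
  if_neg fun hxy => h.not_ge hxy.2

lemma sSign_of_odd_of_le_add {k : ℕ} {x y : Fin k} (hx : x.val % 2 = 1) (h : k ≤ x.val + y.val) :
    sSign x y = -1 :=
  if_pos ⟨hx, h⟩

lemma f3_single {k m : ℕ} (a b c : Fin k) (u v w : Fin m → ℝ) :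
    f3 (Pi.single a u) (Pi.single b v) (Pi.single c w) = sSign b a * mdot v u w := by
  simp [f3, mdot, Pi.single_apply, ite_apply, ite_mul, mul_ite, Finset.sum_ite_eq', Finset.mul_sum]

/-- For every k ≥ 2, f₃ can distinguish a triple from its reverse. -/
theorem f3_supports_antisymmetry (k m : ℕ) (hk : 2 ≤ k) (hm : 1 ≤ m) :
    ∃ h r t : Fin k → Fin m → ℝ, f3 h r t ≠ f3 t r h := by
  let first : Fin k := ⟨0, by omega⟩
  let second : Fin k := ⟨1, by omega⟩
  let last : Fin k := ⟨k - 1, by omega⟩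
  refine ⟨Pi.single first 1, Pi.single second 1, Pi.single last 1, ?_⟩
  rw [f3_single, f3_single, mdot_one_one_one,
    sSign_of_add_lt (show 1 + 0 < k by omega),
    sSign_of_odd_of_le_add (by rfl) (show k ≤ 1 + (k - 1) by omega)]
  have : (0 : ℝ) < m := by exact_mod_cast hm
  linarith
end

section
/- Let m ≥ 1 and let R, H, T ∈ ℂ^m with every entry of R purely imaginary (Re(R_i) = 0 for all i). Then the ComplEx score is antisymmetric in the head and tail: Re(∑_{i<m} R_i H_i conj(T_i)) = −Re(∑_{i<m} R_i T_i conj(H_i)). Hence a relation embedding with zero real part models antisymmetric relations. -/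
open Finset

/-- `r z w̄` and `r w z̄` are `r u` and `r ū` for `u = z w̄`, so their real parts add up to
`2 Re r Re u`. -/
theorem re_mul_mul_conj_add_re_mul_mul_conj (r z w : ℂ) :
    (r * z * (starRingEnd ℂ) w).re + (r * w * (starRingEnd ℂ) z).re =
      2 * r.re * (z * (starRingEnd ℂ) w).re := by
  simp only [Complex.mul_re, Complex.mul_im, Complex.conj_re, Complex.conj_im]
  ring

theorem re_mul_mul_conj_eq_neg_of_re_eq_zero {r : ℂ} (hr : r.re = 0) (z w : ℂ) :
    (r * z * (starRingEnd ℂ) w).re = -(r * w * (starRingEnd ℂ) z).re := by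
  have h := re_mul_mul_conj_add_re_mul_mul_conj r z w
  rw [hr, mul_zero, zero_mul] at h
  linarith

theorem complex_antisymm_of_imaginary_general (m : ℕ) (R H T : Fin m → ℂ)
    (hR : ∀ i, (R i).re = 0) :
    (∑ i : Fin m, R i * H i * (starRingEnd ℂ) (T i)).re =
      -(∑ i : Fin m, R i * T i * (starRingEnd ℂ) (H i)).re := by
  rw [Complex.re_sum, Complex.re_sum, ← Finset.sum_neg_distrib]
  exact Finset.sum_congr rfl fun i _ => re_mul_mul_conj_eq_neg_of_re_eq_zero (hR i) (H i) (T i)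

/-- A ComplEx relation embedding with zero real part models antisymmetric relations. -/
theorem complex_antisymm_of_imaginary (m : ℕ) (hm : 1 ≤ m) (R H T : Fin m → ℂ)
    (hR : ∀ i, (R i).re = 0) :
    (∑ i : Fin m, R i * H i * (starRingEnd ℂ) (T i)).re =
      -(∑ i : Fin m, R i * T i * (starRingEnd ℂ) (H i)).re :=
  complex_antisymm_of_imaginary_general m R H T hR
end
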